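/- arXiv:math-ph/0512062 — 4 statements merged into one kernel-verified Lean document; each statement's English description precedes it below -/
import Mathlib

section
/- Let k ≥ 1, let U be a nonempty cone in ℝ^k, and let α and β satisfy the stated conditions. For any A' > A > 0 and B' > B > 0 there exist σ, τ > 0 and a constant C such that ρ_{U,A',B'}(z) − ρ_{U,A,B}(z) + C ≥ σ·|z|^τ for all z ∈ ℂ^k. -/
open MeasureTheory Set Filter
open scoped ENNReal

noncomputable section

/-- `ℝ^k` with the uniform (sup) norm. -/
abbrev RV (k : ℕ) := Fin k → ℝ
/-- `ℂ^k` with the uniform (sup) norm. -/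
abbrev CV (k : ℕ) := Fin k → ℂ

/-- Real part of a point of `ℂ^k`. -/
def reP {k : ℕ} (z : CV k) : RV k := fun j => (z j).re
/-- Imaginary part of a point of `ℂ^k`. -/
def imP {k : ℕ} (z : CV k) : RV k := fun j => (z j).im

/-- A (nonempty) cone in `ℝ^k`. -/
def IsConeSet {k : ℕ} (U : Set (RV k)) : Prop :=
  U.Nonempty ∧ ∀ x ∈ U, ∀ t : ℝ, 0 < t → t • x ∈ U

/-- `W` is a conic neighborhood of the cone `U`: `W` is a cone containing `U`
whose projection to the unit sphere is open. -/
def ConicNbhd {k : ℕ} (W U : Set (RV k)) : Prop :=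
  IsConeSet W ∧ U ⊆ W ∧
    IsOpen {p : Metric.sphere (0 : RV k) 1 |
      ∃ x ∈ W, x ≠ 0 ∧ ‖x‖⁻¹ • x = (p : RV k)}

/-- The weight function `ρ_{U,A,B}(x+iy) = -α(|x|/A) + β(B|y|) + β(B δ_U(x))`. -/
def rhoW {k : ℕ} (α β : ℝ → ℝ) (U : Set (RV k)) (A B : ℝ) (z : CV k) : ℝ :=
  -α (‖reP z‖ / A) + β (B * ‖imP z‖) + β (B * Metric.infDist (reP z) U)

/-- `‖f‖_{U,A,B} = sup_z |f(z)| e^{-ρ_{U,A,B}(z)}`, as a value in `ℝ≥0∞`. -/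
def supNorm {k : ℕ} (α β : ℝ → ℝ) (U : Set (RV k)) (A B : ℝ) (f : CV k → ℂ) : ℝ≥0∞ :=
  ⨆ z : CV k, ENNReal.ofReal (‖f z‖ * Real.exp (-(rhoW α β U A B z)))

/-- `‖f‖'_{U,A,B} = (∫ |f(z)|² e^{-2ρ_{U,A,B}(z)} dλ(z))^{1/2}`, as a value in `ℝ≥0∞`. -/
def l2Norm {k : ℕ} (α β : ℝ → ℝ) (U : Set (RV k)) (A B : ℝ) (f : CV k → ℂ) : ℝ≥0∞ :=
  (∫⁻ z : CV k, ENNReal.ofReal (‖f z‖ ^ 2 * Real.exp (-(2 * rhoW α β U A B z)))) ^ (1/2 : ℝ)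

/-- The standing assumptions on the indicator functions `α`, `β`:
unbounded, continuous, (strictly) monotonically increasing on `[0,∞)`, `β` convex,
and `α(s)/s^κ` nondecreasing for large `s` for some `κ > 0`. -/
structure GoodPair (α β : ℝ → ℝ) : Prop where
  alpha_cont : ContinuousOn α (Ici 0)
  alpha_mono : StrictMonoOn α (Ici 0)
  alpha_unbdd : ∀ M : ℝ, ∃ s : ℝ, 0 ≤ s ∧ M < α s
  beta_cont : ContinuousOn β (Ici 0)
  beta_mono : StrictMonoOn β (Ici 0)
  beta_unbdd : ∀ M : ℝ, ∃ s : ℝ, 0 ≤ s ∧ M < β s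
  beta_convex : ConvexOn ℝ (Ici 0) β
  kappa : ∃ κ : ℝ, 0 < κ ∧ ∃ s₀ : ℝ, 0 < s₀ ∧
    MonotoneOn (fun s : ℝ => α s / s ^ κ) (Ici s₀)

/-- Nontriviality of the space `E^β_α(ℝ^k)`. -/
def NontrivialE (k : ℕ) (α β : ℝ → ℝ) : Prop :=
  ∃ A₀ B₀ : ℝ, 0 < A₀ ∧ 0 < B₀ ∧ ∃ f₀ : CV k → ℂ,
    Differentiable ℂ f₀ ∧ f₀ ≠ 0 ∧ supNorm α β Set.univ A₀ B₀ f₀ < ⊤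

/-- Plurisubharmonic: upper semicontinuous and satisfying the sub-mean-value
property on every complex line. -/
def Plurisubharmonic {k : ℕ} (ρ : CV k → ℝ) : Prop :=
  UpperSemicontinuous ρ ∧ ∀ z w : CV k,
    ρ z ≤ (1 / (2 * Real.pi)) *
      ∫ θ in (0:ℝ)..(2 * Real.pi), ρ (z + Complex.exp (θ * Complex.I) • w)

/-- `f` belongs to `V(ℝ^k)`: entire with `‖f‖_{ℝ^k,A,B} < ∞` for some `A, B > 0`. -/
def MemV0 {k : ℕ} (α β : ℝ → ℝ) (f : CV k → ℂ) : Prop :=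
  Differentiable ℂ f ∧ ∃ A B : ℝ, 0 < A ∧ 0 < B ∧ supNorm α β Set.univ A B f < ⊤

/-- `f` belongs to `V(K)`: entire with `‖f‖_{W,A,B} < ∞` for some `A, B > 0`
and some conic neighborhood `W` of `K`. -/
def MemVK {k : ℕ} (α β : ℝ → ℝ) (K : Set (RV k)) (f : CV k → ℂ) : Prop :=
  Differentiable ℂ f ∧ ∃ A B : ℝ, 0 < A ∧ 0 < B ∧
    ∃ W : Set (RV k), ConicNbhd W K ∧ supNorm α β W A B f < ⊤

/-- `u` is linear on the subspace cut out by `P`. -/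
def LinearOnP {k : ℕ} (P : (CV k → ℂ) → Prop) (u : (CV k → ℂ) → ℂ) : Prop :=
  (∀ f g : CV k → ℂ, P f → P g → u (f + g) = u f + u g) ∧
  (∀ (c : ℂ) (f : CV k → ℂ), P f → u (c • f) = c * u f)

/-- Continuity of a linear functional on `V(ℝ^k)`. -/
def ContV0 {k : ℕ} (α β : ℝ → ℝ) (u : (CV k → ℂ) → ℂ) : Prop :=
  ∀ A B : ℝ, 0 < A → 0 < B → ∃ C : ℝ, 0 < C ∧ ∀ f : CV k → ℂ, MemV0 α β f →
    supNorm α β Set.univ A B f < ⊤ → ‖u f‖ ≤ C * (supNorm α β Set.univ A B f).toReal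

/-- Continuity of a linear functional on `V(K)`. -/
def ContVK {k : ℕ} (α β : ℝ → ℝ) (K : Set (RV k)) (v : (CV k → ℂ) → ℂ) : Prop :=
  ∀ A B : ℝ, 0 < A → 0 < B → ∀ W : Set (RV k), ConicNbhd W K →
    ∃ C : ℝ, 0 < C ∧ ∀ f : CV k → ℂ, MemVK α β K f →
      supNorm α β W A B f < ⊤ → ‖v f‖ ≤ C * (supNorm α β W A B f).toReal

/-- The closed cone `K` is a carrier cone of `u`: `u` extends to a continuous
linear functional on `V(K)`. -/
def CarrierCone {k : ℕ} (α β : ℝ → ℝ) (u : (CV k → ℂ) → ℂ) (K : Set (RV k)) : Prop :=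
  IsClosed K ∧ IsConeSet K ∧ ∃ v : (CV k → ℂ) → ℂ,
    (∀ f : CV k → ℂ, MemV0 α β f → v f = u f) ∧
    LinearOnP (MemVK α β K) v ∧ ContVK α β K v


/-!
The difference splits into an `x`-, a `y`- and a `δ_U`-term. The `δ_U`-term is nonnegative since
`β` is increasing. A convex increasing `β` grows at least linearly, and convexity on `[0, B'|y|]`
gives `β(B'|y|) - β(B|y|) ≥ (1 - B/B') (β(B'|y|) - β(0))`, so the `y`-term grows linearly in `|y|`.
Monotonicity of `α(s)/s^κ` gives `α(λs) ≥ λ^κ α(s)` for `λ = A'/A > 1` and large `s`, so the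
`x`-term is at least `(λ^κ - 1) α(|x|/A')`, which grows like `|x|^κ`. Finally, with
`τ = min κ 1`, `|z|^τ ≤ |x|^κ + |y| + 2`.
-/

section PowerGrowth

variable {α : ℝ → ℝ} {κ s₀ : ℝ}

theorem mul_rpow_le_of_monotoneOn_div_rpow
    (hratio : MonotoneOn (fun s => α s / s ^ κ) (Ici s₀)) {s₁ s : ℝ}
    (hs₀s₁ : s₀ ≤ s₁) (hs₁s : s₁ ≤ s) (hs : 0 < s) :
    α s₁ / s₁ ^ κ * s ^ κ ≤ α s :=
  (le_div_iff₀ (Real.rpow_pos_of_pos hs κ)).mp (hratio hs₀s₁ (hs₀s₁.trans hs₁s) hs₁s)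

theorem rpow_mul_le_of_monotoneOn_div_rpow
    (hratio : MonotoneOn (fun s => α s / s ^ κ) (Ici s₀)) {s l : ℝ}
    (hs₀s : s₀ ≤ s) (hs : 0 < s) (hl : 1 ≤ l) :
    l ^ κ * α s ≤ α (l * s) := by
  have hsκ : 0 < s ^ κ := Real.rpow_pos_of_pos hs κ
  have hlκ : 0 < l ^ κ := Real.rpow_pos_of_pos (one_pos.trans_le hl) κ
  have hsls : s ≤ l * s := le_mul_of_one_le_left hs.le hl
  have h : α s / s ^ κ ≤ α (l * s) / (l * s) ^ κ := hratio hs₀s (hs₀s.trans hsls) hsls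
  rw [Real.mul_rpow (zero_le_one.trans hl) hs.le, le_div_iff₀ (mul_pos hlκ hsκ)] at h
  calc l ^ κ * α s = α s / s ^ κ * (l ^ κ * s ^ κ) := by field_simp
    _ ≤ α (l * s) := h

theorem exists_mul_rpow_le_sub_of_monotoneOn_div_rpow (hmono : MonotoneOn α (Ici 0))
    (hunbdd : ∀ M : ℝ, ∃ s : ℝ, 0 ≤ s ∧ M < α s)
    (hratio : MonotoneOn (fun s => α s / s ^ κ) (Ici s₀)) (hκ : 0 < κ) {l : ℝ} (hl : 1 < l) :
    ∃ c > 0, ∃ D : ℝ, ∀ s, 0 ≤ s → c * s ^ κ - D ≤ α (l * s) - α s := by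
  obtain ⟨s₁, hs₁, hαs₁⟩ := hunbdd (max 0 (α (max s₀ 0)))
  have hs₁_gt : max s₀ 0 < s₁ :=
    hmono.reflect_lt (le_max_right s₀ 0) hs₁ ((le_max_right _ _).trans_lt hαs₁)
  have hs₀s₁ : s₀ ≤ s₁ := (le_max_left s₀ 0).trans hs₁_gt.le
  have hs₁_pos : 0 < s₁ := (le_max_right s₀ 0).trans_lt hs₁_gt
  have hc₀ : 0 < α s₁ / s₁ ^ κ :=
    div_pos ((le_max_left _ _).trans_lt hαs₁) (Real.rpow_pos_of_pos hs₁_pos κ)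
  have hlκ : 1 < l ^ κ := Real.one_lt_rpow hl hκ
  have hc : 0 < (l ^ κ - 1) * (α s₁ / s₁ ^ κ) := mul_pos (sub_pos.2 hlκ) hc₀
  refine ⟨_, hc, (l ^ κ - 1) * (α s₁ / s₁ ^ κ) * s₁ ^ κ, fun s hs => ?_⟩
  rcases le_or_gt s₁ s with hs₁s | hss₁
  · have hs_pos : 0 < s := hs₁_pos.trans_le hs₁s
    have hpow := mul_le_mul_of_nonneg_left
      (mul_rpow_le_of_monotoneOn_div_rpow hratio hs₀s₁ hs₁s hs_pos) (sub_nonneg.2 hlκ.le)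
    have hdil := rpow_mul_le_of_monotoneOn_div_rpow hratio (hs₀s₁.trans hs₁s) hs_pos hl.le
    have := mul_nonneg hc.le (Real.rpow_nonneg hs₁_pos.le κ)
    linarith
  · have hsκ := mul_le_mul_of_nonneg_left (Real.rpow_le_rpow hs hss₁.le hκ.le) hc.le
    have hαls : α s ≤ α (l * s) :=
      hmono hs (mul_nonneg (zero_le_one.trans hl.le) hs) (le_mul_of_one_le_left hs hl.le)
    linarith

end PowerGrowth

section Convex

variable {β : ℝ → ℝ}

theorem ConvexOn.one_sub_mul_sub_le_sub (hβ : ConvexOn ℝ (Ici 0) β) {x θ : ℝ} (hx : 0 ≤ x)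
    (hθ₀ : 0 ≤ θ) (hθ₁ : θ ≤ 1) :
    (1 - θ) * (β x - β 0) ≤ β x - β (θ * x) := by
  have h := hβ.2 self_mem_Ici (mem_Ici.2 hx) (sub_nonneg.2 hθ₁) hθ₀ (sub_add_cancel 1 θ)
  simp only [smul_eq_mul, mul_zero, zero_add] at h
  linarith

theorem ConvexOn.exists_mul_sub_le_sub (hβ : ConvexOn ℝ (Ici 0) β)
    (hmono : MonotoneOn β (Ici 0)) {t₁ : ℝ} (ht₁ : 0 ≤ t₁) (hβt₁ : β 0 < β t₁) :
    ∃ m > 0, ∃ D : ℝ, ∀ t, 0 ≤ t → m * t - D ≤ β t - β 0 := by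
  have ht₁_pos : 0 < t₁ := hmono.reflect_lt self_mem_Ici ht₁ hβt₁
  have hm : 0 < (β t₁ - β 0) / t₁ := div_pos (sub_pos.2 hβt₁) ht₁_pos
  refine ⟨_, hm, (β t₁ - β 0) / t₁ * t₁, fun t ht => ?_⟩
  rcases le_or_gt t t₁ with htt₁ | ht₁t
  · have hβt : β 0 ≤ β t := hmono self_mem_Ici ht ht
    have := mul_le_mul_of_nonneg_left htt₁ hm.le
    linarith
  · have ht_pos : 0 < t := ht₁_pos.trans ht₁t
    have hsecant := hβ.secant_mono self_mem_Ici (mem_Ici.2 ht₁) (mem_Ici.2 ht)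
      ht₁_pos.ne' ht_pos.ne' ht₁t.le
    rw [sub_zero, sub_zero, le_div_iff₀ ht_pos] at hsecant
    have := mul_nonneg hm.le ht₁_pos.le
    linarith

end Convex

theorem rpow_le_rpow_add_one {a τ κ : ℝ} (ha : 0 ≤ a) (hτ : 0 ≤ τ) (hτκ : τ ≤ κ) :
    a ^ τ ≤ a ^ κ + 1 := by
  rcases le_or_gt a 1 with ha₁ | ha₁
  · linarith [Real.rpow_le_one ha ha₁ hτ, Real.rpow_nonneg ha κ]
  · linarith [Real.rpow_le_rpow_of_exponent_le ha₁.le hτκ]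

theorem add_rpow_min_one_le {a b κ : ℝ} (ha : 0 ≤ a) (hb : 0 ≤ b) (hκ : 0 ≤ κ) :
    (a + b) ^ min κ 1 ≤ a ^ κ + b + 2 := by
  have hτ : 0 ≤ min κ 1 := le_min hκ zero_le_one
  calc (a + b) ^ min κ 1 ≤ a ^ min κ 1 + b ^ min κ 1 :=
        Real.rpow_add_le_add_rpow ha hb hτ (min_le_right κ 1)
    _ ≤ (a ^ κ + 1) + (b ^ (1 : ℝ) + 1) :=
        add_le_add (rpow_le_rpow_add_one ha hτ (min_le_left κ 1))
          (rpow_le_rpow_add_one hb hτ (min_le_right κ 1))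
    _ = a ^ κ + b + 2 := by rw [Real.rpow_one]; ring

theorem norm_le_norm_reP_add_norm_imP {k : ℕ} (z : CV k) : ‖z‖ ≤ ‖reP z‖ + ‖imP z‖ :=
  (pi_norm_le_iff_of_nonneg (by positivity)).2 fun j =>
    (Complex.norm_le_abs_re_add_abs_im (z j)).trans
      (add_le_add (norm_le_pi_norm (reP z) j) (norm_le_pi_norm (imP z) j))

namespace GoodPair

variable {α β : ℝ → ℝ}

theorem exists_mul_rpow_le_alpha_sub (h : GoodPair α β) {A A' : ℝ} (hA : 0 < A) (hAA' : A < A') :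
    ∃ κ : ℝ, 0 < κ ∧ ∃ c : ℝ, 0 < c ∧ ∃ D : ℝ, ∀ r, 0 ≤ r → c * r ^ κ - D ≤ α (r / A) - α (r / A') := by
  obtain ⟨κ, hκ, s₀, -, hratio⟩ := h.kappa
  have hA' : 0 < A' := hA.trans hAA'
  obtain ⟨c, hc, D, hgap⟩ := exists_mul_rpow_le_sub_of_monotoneOn_div_rpow
    h.alpha_mono.monotoneOn h.alpha_unbdd hratio hκ ((one_lt_div hA).2 hAA')
  refine ⟨κ, hκ, c / A' ^ κ, div_pos hc (Real.rpow_pos_of_pos hA' κ), D, fun r hr => ?_⟩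
  have hdil : A' / A * (r / A') = r / A := by field_simp
  have hpow : c * (r / A') ^ κ = c / A' ^ κ * r ^ κ := by
    rw [Real.div_rpow hr hA'.le]; ring
  simpa only [hdil, hpow] using hgap (r / A') (div_nonneg hr hA'.le)

theorem exists_mul_le_beta_sub (h : GoodPair α β) {B B' : ℝ} (hB : 0 < B) (hBB' : B < B') :
    ∃ c > 0, ∃ D : ℝ, ∀ t, 0 ≤ t → c * t - D ≤ β (B' * t) - β (B * t) := by
  obtain ⟨t₁, ht₁, hβt₁⟩ := h.beta_unbdd (β 0)
  obtain ⟨m, hm, D, hlin⟩ := h.beta_convex.exists_mul_sub_le_sub h.beta_mono.monotoneOn ht₁ hβt₁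
  have hB' : 0 < B' := hB.trans hBB'
  have hθ : 0 < 1 - B / B' := sub_pos.2 ((div_lt_one hB').2 hBB')
  refine ⟨(1 - B / B') * m * B', by positivity, (1 - B / B') * D, fun t ht => ?_⟩
  have hconv := h.beta_convex.one_sub_mul_sub_le_sub (mul_nonneg hB'.le ht)
    (div_nonneg hB.le hB'.le) ((div_le_one hB').2 hBB'.le)
  rw [show B / B' * (B' * t) = B * t by field_simp] at hconv
  have := mul_le_mul_of_nonneg_left (hlin (B' * t) (mul_nonneg hB'.le ht)) hθ.le
  linarith

end GoodPair

theorem rho_difference_growth_general {k : ℕ} (U : Set (RV k))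
    (α β : ℝ → ℝ) (hαβ : GoodPair α β)
    (A A' B B' : ℝ) (hA : 0 < A) (hAA' : A < A') (hB : 0 < B) (hBB' : B < B') :
    ∃ σ τ : ℝ, 0 < σ ∧ 0 < τ ∧ ∃ C : ℝ, ∀ z : CV k,
      σ * ‖z‖ ^ τ ≤ rhoW α β U A' B' z - rhoW α β U A B z + C := by
  obtain ⟨κ, hκ, c₁, hc₁, D₁, hα⟩ := hαβ.exists_mul_rpow_le_alpha_sub hA hAA'
  obtain ⟨c₂, hc₂, D₂, hβ⟩ := hαβ.exists_mul_le_beta_sub hB hBB'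
  have hσ : 0 < min c₁ c₂ := lt_min hc₁ hc₂
  have hτ : 0 < min κ 1 := lt_min hκ one_pos
  refine ⟨min c₁ c₂, min κ 1, hσ, hτ, D₁ + D₂ + 2 * min c₁ c₂, fun z => ?_⟩
  simp only [rhoW]
  set x := ‖reP z‖
  set y := ‖imP z‖
  set d := Metric.infDist (reP z) U
  have hx : 0 ≤ x := norm_nonneg _
  have hy : 0 ≤ y := norm_nonneg _
  have hd : 0 ≤ d := Metric.infDist_nonneg
  have hz : ‖z‖ ^ min κ 1 ≤ x ^ κ + y + 2 :=
    (Real.rpow_le_rpow (norm_nonneg z) (norm_le_norm_reP_add_norm_imP z) hτ.le).trans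
      (add_rpow_min_one_le hx hy hκ.le)
  have hδ : β (B * d) ≤ β (B' * d) := hαβ.beta_mono.monotoneOn (mul_nonneg hB.le hd)
    (mul_nonneg (hB.trans hBB').le hd) (mul_le_mul_of_nonneg_right hBB'.le hd)
  have h₁ := mul_le_mul_of_nonneg_right (min_le_left c₁ c₂) (Real.rpow_nonneg hx κ)
  have h₂ := mul_le_mul_of_nonneg_right (min_le_right c₁ c₂) hy
  have h₃ := mul_le_mul_of_nonneg_left hz hσ.le
  linarith [hα x hx, hβ y hy]

/-- the difference `ρ_{U,A',B'} - ρ_{U,A,B}` grows at least like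
`σ|z|^τ`. -/
theorem rho_difference_growth {k : ℕ} (hk : 1 ≤ k) (U : Set (RV k)) (hU : IsConeSet U)
    (α β : ℝ → ℝ) (hαβ : GoodPair α β)
    (A A' B B' : ℝ) (hA : 0 < A) (hAA' : A < A') (hB : 0 < B) (hBB' : B < B') :
    ∃ σ τ : ℝ, 0 < σ ∧ 0 < τ ∧ ∃ C : ℝ, ∀ z : CV k,
      σ * ‖z‖ ^ τ ≤ rhoW α β U A' B' z - rhoW α β U A B z + C :=
  rho_difference_growth_general U α β hαβ A A' B B' hA hAA' hB hBB'

end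
end

section
/- Let k ≥ 1, R > 0, let U be a nonempty cone in ℝ^k, and let α and β be nondecreasing functions on [0,∞). For any A' > A > 0 and B' > B > 0 there exists a constant C such that ρ_{U,A,B}(z+ζ) ≤ ρ_{U,A',B'}(z) + C for all z, ζ ∈ ℂ^k with |ζ| ≤ R. -/
open MeasureTheory Set Filter
open scoped ENNReal

noncomputable section

/-- translation estimate for the weight functions. -/
theorem rho_translation {k : ℕ} (hk : 1 ≤ k) (R : ℝ) (hR : 0 < R)
    (U : Set (RV k)) (hU : IsConeSet U)
    (α β : ℝ → ℝ) (hαm : MonotoneOn α (Ici 0)) (hβm : MonotoneOn β (Ici 0))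
    (A A' B B' : ℝ) (hA : 0 < A) (hAA' : A < A') (hB : 0 < B) (hBB' : B < B') :
    ∃ C : ℝ, ∀ z ζ : CV k, ‖ζ‖ ≤ R →
      rhoW α β U A B (z + ζ) ≤ rhoW α β U A' B' z + C := by
  have hA' : 0 < A' := hA.trans hAA'
  have hB' : 0 < B' := hB.trans hBB'
  set M := A' * R / (A' - A) with hM
  set N := B * R / (B' - B) with hN
  have hMpos : 0 ≤ M := by
    apply div_nonneg (by positivity) (by linarith)
  have hNpos : 0 ≤ N := by
    apply div_nonneg (by positivity) (by linarith)
  set C₁ := max 0 (α (M / A') - α 0) with hC₁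
  set C₂ := max 0 (β (B * N + B * R) - β 0) with hC₂
  have hC₁0 : 0 ≤ C₁ := le_max_left _ _
  have hC₂0 : 0 ≤ C₂ := le_max_left _ _
  refine ⟨C₁ + C₂ + C₂, ?_⟩
  have hβkey : ∀ s t : ℝ, 0 ≤ s → 0 ≤ t → s ≤ t + R → β (B * s) ≤ β (B' * t) + C₂ := by
    intro s t hs ht hst
    by_cases h : N ≤ t
    · have h1 : B * s ≤ B' * t := by
        have : B * R ≤ (B' - B) * t := by
          rw [hN] at h
          calc B * R = (B' - B) * (B * R / (B' - B)) := by
                rw [mul_div_cancel₀ _ (ne_of_gt (show (0:ℝ) < B' - B by linarith))]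
          _ ≤ (B' - B) * t := by
                apply mul_le_mul_of_nonneg_left h (by linarith)
        nlinarith
      have := hβm (mem_Ici.2 (by positivity)) (mem_Ici.2 (by positivity)) h1
      linarith
    · push_neg at h
      have h1 : B * s ≤ B * N + B * R := by nlinarith
      have h2 : β (B * s) ≤ β (B * N + B * R) :=
        hβm (mem_Ici.2 (by positivity)) (mem_Ici.2 (by positivity)) h1
      have h3 : β 0 ≤ β (B' * t) :=
        hβm (mem_Ici.2 le_rfl) (mem_Ici.2 (by positivity)) (by positivity)
      have h4 : β (B * N + B * R) - β 0 ≤ C₂ := le_max_right _ _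
      linarith
  have hαkey : ∀ x x' : ℝ, 0 ≤ x → 0 ≤ x' → x - R ≤ x' → -α (x' / A) ≤ -α (x / A') + C₁ := by
    intro x x' hx hx' hxx'
    by_cases h : M ≤ x
    · have h1 : x / A' ≤ x' / A := by
        rw [div_le_div_iff₀ hA' hA]
        have : A' * R ≤ (A' - A) * x := by
          rw [hM] at h
          calc A' * R = (A' - A) * (A' * R / (A' - A)) := by
                rw [mul_div_cancel₀ _ (ne_of_gt (show (0:ℝ) < A' - A by linarith))]
          _ ≤ (A' - A) * x := by apply mul_le_mul_of_nonneg_left h (by linarith)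
        nlinarith
      have := hαm (mem_Ici.2 (by positivity)) (mem_Ici.2 (by positivity)) h1
      linarith
    · push_neg at h
      have h1 : α (x / A') ≤ α (M / A') := by
        apply hαm (mem_Ici.2 (by positivity)) (mem_Ici.2 (by positivity))
        have := h.le
        gcongr
      have h2 : α 0 ≤ α (x' / A) :=
        hαm (mem_Ici.2 le_rfl) (mem_Ici.2 (by positivity)) (by positivity)
      have h3 : α (M / A') - α 0 ≤ C₁ := le_max_right _ _
      linarith
  intro z ζ hζ
  have hre : reP (z + ζ) = reP z + reP ζ := by
    funext j; simp [reP]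
  have him : imP (z + ζ) = imP z + imP ζ := by
    funext j; simp [imP]
  have hreζ : ‖reP ζ‖ ≤ R := by
    refine le_trans ?_ hζ
    apply pi_norm_le_iff_of_nonneg (norm_nonneg ζ) |>.2
    intro j
    exact (Complex.abs_re_le_norm (ζ j)).trans (norm_le_pi_norm ζ j)
  have himζ : ‖imP ζ‖ ≤ R := by
    refine le_trans ?_ hζ
    apply pi_norm_le_iff_of_nonneg (norm_nonneg ζ) |>.2
    intro j
    exact (Complex.abs_im_le_norm (ζ j)).trans (norm_le_pi_norm ζ j)
  have e1 : -α (‖reP (z + ζ)‖ / A) ≤ -α (‖reP z‖ / A') + C₁ := by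
    apply hαkey _ _ (norm_nonneg _) (norm_nonneg _)
    rw [hre]
    have := norm_add_le (reP z + reP ζ) (-reP ζ)
    simp only [add_neg_cancel_right, norm_neg] at this
    linarith
  have e2 : β (B * ‖imP (z + ζ)‖) ≤ β (B' * ‖imP z‖) + C₂ := by
    apply hβkey _ _ (norm_nonneg _) (norm_nonneg _)
    rw [him]
    have := norm_add_le (imP z) (imP ζ)
    linarith
  have e3 : β (B * Metric.infDist (reP (z + ζ)) U) ≤
      β (B' * Metric.infDist (reP z) U) + C₂ := by
    apply hβkey _ _ (Metric.infDist_nonneg) (Metric.infDist_nonneg)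
    rw [hre]
    have h := Metric.infDist_le_infDist_add_dist (x := reP z + reP ζ) (y := reP z) (s := U)
    have hd : dist (reP z + reP ζ) (reP z) = ‖reP ζ‖ := by
      rw [dist_eq_norm]; simp
    rw [hd] at h
    linarith
  simp only [rhoW]
  linarith

end
end

section
/- Let k ≥ 1, let U be a nonempty cone in ℝ^k, and let α and β be nondecreasing functions on [0,∞). Let f be an entire function on ℂ^k such that ‖f‖_{W,A,B} < ∞ for some A, B > 0 and some conic neighborhood W of U. Then for every ζ ∈ ℂ^k, the translated function z ↦ f(z+ζ) satisfies ‖f(·+ζ)‖_{W,A',B'} < ∞ for some A', B' > 0 (with the same conic neighborhood W). In particular, if f belongs to E^β_α(U), then so does f(·+ζ). -/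
open MeasureTheory Set Filter
open scoped ENNReal

noncomputable section

/-! Translating by `ζ` moves `|x|`, `|y|` and `δ_W(x)` by at most `|ζ|`. Since `α`, `β` are merely
monotone, each such shift is absorbed by doubling `A` and `B` at the price of an additive
constant in the weight, i.e. a multiplicative constant in the norm. -/

lemma MonotoneOn.apply_le_add_sub_apply_zero {φ : ℝ → ℝ} (hφ : MonotoneOn φ (Ici 0))
    {s r t : ℝ} (hs : 0 ≤ s) (hr : 0 ≤ r) (ht : 0 ≤ t) (h : 2 * t ≤ s + r) :
    φ t ≤ φ s + φ r - φ 0 := by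
  rcases le_total s r with hsr | hrs
  · have hs0 : φ 0 ≤ φ s := hφ self_mem_Ici hs hs
    have htr : φ t ≤ φ r := hφ ht hr (by linarith)
    linarith
  · have hr0 : φ 0 ≤ φ r := hφ self_mem_Ici hr hr
    have hts : φ t ≤ φ s := hφ ht hs (by linarith)
    linarith

lemma reP_add {k : ℕ} (z w : CV k) : reP (z + w) = reP z + reP w := rfl

lemma imP_add {k : ℕ} (z w : CV k) : imP (z + w) = imP z + imP w := rfl

lemma rhoW_add_le {k : ℕ} {α β : ℝ → ℝ} (hα : MonotoneOn α (Ici 0)) (hβ : MonotoneOn β (Ici 0))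
    (W : Set (RV k)) {A B : ℝ} (hA : 0 < A) (hB : 0 < B) (z ζ : CV k) :
    rhoW α β W A B (z + ζ) ≤ rhoW α β W (2 * A) (2 * B) z +
      ((α (‖reP ζ‖ / A) - α 0) + (β (2 * B * ‖imP ζ‖) - β 0) + (β (2 * B * ‖reP ζ‖) - β 0)) := by
  set x := reP z
  set y := imP z
  set a := reP ζ
  set b := imP ζ
  have hx : 2 * (‖x‖ / (2 * A)) ≤ ‖x + a‖ / A + ‖a‖ / A := by
    rw [mul_div_assoc', mul_div_mul_left _ _ two_ne_zero, ← add_div]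
    gcongr
    simpa using norm_sub_le (x + a) a
  have hy : 2 * (B * ‖y + b‖) ≤ 2 * B * ‖y‖ + 2 * B * ‖b‖ := by
    nlinarith [norm_add_le y b]
  have hδ : 2 * (B * Metric.infDist (x + a) W) ≤
      2 * B * Metric.infDist x W + 2 * B * ‖a‖ := by
    have := Metric.infDist_le_infDist_add_dist (x := x + a) (y := x) (s := W)
    rw [dist_eq_norm, add_sub_cancel_left] at this
    nlinarith
  have eα := hα.apply_le_add_sub_apply_zero (by positivity) (by positivity) (by positivity) hx
  have eβ := hβ.apply_le_add_sub_apply_zero (by positivity) (by positivity) (by positivity) hy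
  have eδ := hβ.apply_le_add_sub_apply_zero (mul_nonneg (by positivity) Metric.infDist_nonneg)
    (by positivity) (mul_nonneg hB.le Metric.infDist_nonneg) hδ
  simp only [rhoW, reP_add, imP_add]
  linarith

lemma supNorm_comp_add_le {k : ℕ} {α β : ℝ → ℝ} {W W' : Set (RV k)} {A B A' B' c : ℝ}
    {ζ : CV k} (h : ∀ z, rhoW α β W A B (z + ζ) ≤ rhoW α β W' A' B' z + c) (f : CV k → ℂ) :
    supNorm α β W' A' B' (fun z => f (z + ζ)) ≤ ENNReal.ofReal (Real.exp c) * supNorm α β W A B f := by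
  refine iSup_le fun z => ?_
  calc ENNReal.ofReal (‖f (z + ζ)‖ * Real.exp (-rhoW α β W' A' B' z))
      ≤ ENNReal.ofReal (Real.exp c * (‖f (z + ζ)‖ * Real.exp (-rhoW α β W A B (z + ζ)))) := by
        gcongr ENNReal.ofReal ?_
        rw [mul_left_comm, ← Real.exp_add]
        gcongr
        linarith [h z]
    _ = ENNReal.ofReal (Real.exp c) *
          ENNReal.ofReal (‖f (z + ζ)‖ * Real.exp (-rhoW α β W A B (z + ζ))) :=
        ENNReal.ofReal_mul (Real.exp_pos c).le
    _ ≤ ENNReal.ofReal (Real.exp c) * supNorm α β W A B f := by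
        gcongr
        exact le_iSup (fun w => ENNReal.ofReal (‖f w‖ * Real.exp (-rhoW α β W A B w))) (z + ζ)

theorem translation_stability_general {k : ℕ}
    (α β : ℝ → ℝ) (hαm : MonotoneOn α (Ici 0)) (hβm : MonotoneOn β (Ici 0))
    (f : CV k → ℂ)
    (A B : ℝ) (hA : 0 < A) (hB : 0 < B) (W : Set (RV k))
    (hfn : supNorm α β W A B f < ⊤) (ζ : CV k) :
    ∃ A' B' : ℝ, 0 < A' ∧ 0 < B' ∧
      supNorm α β W A' B' (fun z => f (z + ζ)) < ⊤ :=
  ⟨2 * A, 2 * B, by positivity, by positivity,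
    (supNorm_comp_add_le (rhoW_add_le hαm hβm W hA hB · ζ) f).trans_lt
      (ENNReal.mul_lt_top ENNReal.ofReal_lt_top hfn)⟩

/-- stability of `E^β_α(U)` under translations. -/
theorem translation_stability {k : ℕ} (hk : 1 ≤ k) (U : Set (RV k)) (hU : IsConeSet U)
    (α β : ℝ → ℝ) (hαm : MonotoneOn α (Ici 0)) (hβm : MonotoneOn β (Ici 0))
    (f : CV k → ℂ) (hf : Differentiable ℂ f)
    (A B : ℝ) (hA : 0 < A) (hB : 0 < B) (W : Set (RV k)) (hW : ConicNbhd W U)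
    (hfn : supNorm α β W A B f < ⊤) (ζ : CV k) :
    ∃ A' B' : ℝ, 0 < A' ∧ 0 < B' ∧
      supNorm α β W A' B' (fun z => f (z + ζ)) < ⊤ :=
  translation_stability_general α β hαm hβm f A B hA hB W hfn ζ
end
end

section
/- Let k ≥ 1 and let K₁ and K₂ be closed cones in ℝ^k. For any conic neighborhood W of K₁ ∩ K₂ there exist conic neighborhoods V₁ of K₁ and V₂ of K₂ such that cl(V₁) ∩ cl(V₂) ⊆ W, where cl denotes topological closure in ℝ^k. -/
open MeasureTheory Set Filter
open scoped ENNReal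

noncomputable section

open Topology in
private lemma zero_mem_closed_cone {k : ℕ} {K : Set (RV k)} (hc : IsClosed K)
    (hK : IsConeSet K) : (0 : RV k) ∈ K := by
  obtain ⟨x, hx⟩ := hK.1
  have h : Tendsto (fun t : ℝ => t • x) (𝓝[>] (0:ℝ)) (𝓝 (0 : RV k)) := by
    have h1 : Continuous (fun t : ℝ => t • x) := continuous_id.smul continuous_const
    have := h1.tendsto (0:ℝ)
    simpa using this.mono_left nhdsWithin_le_nhds
  exact hc.mem_of_tendsto h (eventually_nhdsWithin_of_forall fun t ht => hK.2 x hx t ht)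

private lemma norm_inv_smul_eq_one {k : ℕ} {x : RV k} (hx : x ≠ 0) :
    ‖(‖x‖⁻¹ • x)‖ = 1 := by
  rw [norm_smul, Real.norm_of_nonneg (inv_nonneg.mpr (norm_nonneg x))]
  exact inv_mul_cancel₀ (norm_ne_zero_iff.mpr hx)

private lemma inv_smul_smul_scale {k : ℕ} {t : ℝ} (ht : 0 < t) (x : RV k) :
    ‖t • x‖⁻¹ • (t • x) = ‖x‖⁻¹ • x := by
  by_cases hx : x = 0
  · simp [hx]
  · rw [norm_smul, Real.norm_of_nonneg ht.le, smul_smul]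
    congr 1
    have h1 : ‖x‖ ≠ 0 := norm_ne_zero_iff.mpr hx
    field_simp

/-- separating conic neighborhoods of `K₁` and `K₂` over a conic
neighborhood of `K₁ ∩ K₂`. -/
theorem separating_conic_neighborhoods {k : ℕ} (hk : 1 ≤ k)
    (K₁ K₂ : Set (RV k)) (hK₁c : IsClosed K₁) (hK₁ : IsConeSet K₁)
    (hK₂c : IsClosed K₂) (hK₂ : IsConeSet K₂)
    (W : Set (RV k)) (hW : ConicNbhd W (K₁ ∩ K₂)) :
    ∃ V₁ V₂ : Set (RV k), ConicNbhd V₁ K₁ ∧ ConicNbhd V₂ K₂ ∧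
      closure V₁ ∩ closure V₂ ⊆ W := by
  classical
  have h0W : (0 : RV k) ∈ W :=
    hW.2.1 ⟨zero_mem_closed_cone hK₁c hK₁, zero_mem_closed_cone hK₂c hK₂⟩
  -- the whole space is a conic neighborhood of anything
  have huniv : ∀ K : Set (RV k), ConicNbhd Set.univ K := by
    intro K
    refine ⟨⟨⟨0, trivial⟩, fun x _ t _ => trivial⟩, subset_univ K, ?_⟩
    have : {p : Metric.sphere (0 : RV k) 1 |
        ∃ x ∈ (Set.univ : Set (RV k)), x ≠ 0 ∧ ‖x‖⁻¹ • x = (p : RV k)} = Set.univ := by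
      ext p
      simp only [Set.mem_setOf_eq, Set.mem_univ, iff_true]
      have hp : ‖(p : RV k)‖ = 1 := mem_sphere_zero_iff_norm.mp p.2
      refine ⟨(p : RV k), trivial, ?_, by rw [hp]; simp⟩
      intro h0
      rw [h0] at hp; simp at hp
    rw [this]; exact isOpen_univ
  -- {0} is a conic neighborhood of any subcone of {0}
  have hzero : ∀ K : Set (RV k), K ⊆ {0} → ConicNbhd ({0} : Set (RV k)) K := by
    intro K hK0
    refine ⟨⟨⟨0, rfl⟩, fun x hx t _ => by simp [Set.mem_singleton_iff.mp hx]⟩, hK0, ?_⟩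
    have : {p : Metric.sphere (0 : RV k) 1 |
        ∃ x ∈ ({0} : Set (RV k)), x ≠ 0 ∧ ‖x‖⁻¹ • x = (p : RV k)} = ∅ := by
      ext p
      simp only [Set.mem_setOf_eq, Set.mem_singleton_iff, Set.mem_empty_iff_false, iff_false]
      rintro ⟨x, rfl, hx0, -⟩
      exact hx0 rfl
    rw [this]; exact isOpen_empty
  by_cases h1 : K₁ ⊆ {0}
  · refine ⟨{0}, Set.univ, hzero K₁ h1, huniv K₂, ?_⟩
    rw [closure_singleton]
    intro x hx
    have : x = 0 := hx.1
    rw [this]; exact h0W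
  by_cases h2 : K₂ ⊆ {0}
  · refine ⟨Set.univ, {0}, huniv K₁, hzero K₂ h2, ?_⟩
    rw [closure_singleton]
    intro x hx
    have : x = 0 := hx.2
    rw [this]; exact h0W
  -- main case
  obtain ⟨x₁, hx₁K, hx₁0⟩ : ∃ x ∈ K₁, x ≠ 0 := by
    by_contra h; push_neg at h
    exact h1 fun x hx => h x hx
  obtain ⟨x₂, hx₂K, hx₂0⟩ : ∃ x ∈ K₂, x ≠ 0 := by
    by_contra h; push_neg at h
    exact h2 fun x hx => h x hx
  set S₁ : Set (RV k) := K₁ ∩ Metric.sphere 0 1 with hS₁def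
  set S₂ : Set (RV k) := K₂ ∩ Metric.sphere 0 1 with hS₂def
  have hS₁c : IsClosed S₁ := hK₁c.inter Metric.isClosed_sphere
  have hS₂c : IsClosed S₂ := hK₂c.inter Metric.isClosed_sphere
  have hS₁ne : S₁.Nonempty := by
    refine ⟨‖x₁‖⁻¹ • x₁, hK₁.2 x₁ hx₁K _ ?_, mem_sphere_zero_iff_norm.mpr (norm_inv_smul_eq_one hx₁0)⟩
    exact inv_pos.mpr (norm_pos_iff.mpr hx₁0)
  have hS₂ne : S₂.Nonempty := by
    refine ⟨‖x₂‖⁻¹ • x₂, hK₂.2 x₂ hx₂K _ ?_, mem_sphere_zero_iff_norm.mpr (norm_inv_smul_eq_one hx₂0)⟩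
    exact inv_pos.mpr (norm_pos_iff.mpr hx₂0)
  -- the projection of W is relatively open: get an open set U of the ambient space
  obtain ⟨U, hUo, hUP⟩ := isOpen_induced_iff.mp hW.2.2
  have hUmem : ∀ p : RV k, (hp : p ∈ Metric.sphere (0 : RV k) 1) →
      (p ∈ U ↔ ∃ x ∈ W, x ≠ 0 ∧ ‖x‖⁻¹ • x = p) := by
    intro p hp
    have := Set.ext_iff.mp hUP ⟨p, hp⟩
    simpa using this
  -- compact complement and positive distance
  have hDc : IsCompact ((Metric.sphere (0 : RV k) 1) \ U) :=
    (isCompact_sphere (0 : RV k) 1).diff hUo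
  set f : RV k → ℝ := fun p => max (Metric.infDist p S₁) (Metric.infDist p S₂) with hfdef
  have hfc : Continuous f := (Metric.continuous_infDist_pt S₁).max (Metric.continuous_infDist_pt S₂)
  have hpos : ∀ p ∈ (Metric.sphere (0 : RV k) 1) \ U, 0 < f p := by
    rintro p ⟨hps, hpU⟩
    rcases lt_or_ge 0 (f p) with h | h
    · exact h
    · exfalso
      have h1' : Metric.infDist p S₁ = 0 :=
        le_antisymm (le_trans (le_max_left _ _) h) Metric.infDist_nonneg
      have h2' : Metric.infDist p S₂ = 0 :=
        le_antisymm (le_trans (le_max_right _ _) h) Metric.infDist_nonneg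
      have hp1 : p ∈ S₁ := hS₁c.mem_iff_infDist_zero hS₁ne |>.mpr h1'
      have hp2 : p ∈ S₂ := hS₂c.mem_iff_infDist_zero hS₂ne |>.mpr h2'
      have hpW : p ∈ W := hW.2.1 ⟨hp1.1, hp2.1⟩
      have hpn : ‖p‖ = 1 := mem_sphere_zero_iff_norm.mp hps
      refine hpU ((hUmem p hps).mpr ⟨p, hpW, ?_, by rw [hpn]; simp⟩)
      intro h0; rw [h0] at hpn; simp at hpn
  -- choose ε
  obtain ⟨ε, hε, hkey⟩ : ∃ ε : ℝ, 0 < ε ∧ ∀ p ∈ Metric.sphere (0 : RV k) 1,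
      Metric.infDist p S₁ ≤ ε → Metric.infDist p S₂ ≤ ε → p ∈ U := by
    rcases Set.eq_empty_or_nonempty ((Metric.sphere (0 : RV k) 1) \ U) with hD | hD
    · refine ⟨1, one_pos, fun p hp _ _ => ?_⟩
      by_contra hpU
      exact absurd (Set.mem_diff p |>.mpr ⟨hp, hpU⟩) (by rw [hD]; exact Set.notMem_empty p)
    · obtain ⟨p₀, hp₀, hmin⟩ := hDc.exists_isMinOn hD hfc.continuousOn
      refine ⟨f p₀ / 2, by linarith [hpos p₀ hp₀], fun p hp h1' h2' => ?_⟩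
      by_contra hpU
      have hpD : p ∈ (Metric.sphere (0 : RV k) 1) \ U := ⟨hp, hpU⟩
      have hle : f p₀ ≤ f p := hmin hpD
      have hfp : f p ≤ f p₀ / 2 := max_le h1' h2'
      have := hpos p₀ hp₀
      linarith
  -- the separating cones
  set V₁ : Set (RV k) := {0} ∪ {x | x ≠ 0 ∧ Metric.infDist (‖x‖⁻¹ • x) S₁ < ε} with hV₁def
  set V₂ : Set (RV k) := {0} ∪ {x | x ≠ 0 ∧ Metric.infDist (‖x‖⁻¹ • x) S₂ < ε} with hV₂def
  have hcone : ∀ S : Set (RV k),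
      IsConeSet ({0} ∪ {x | x ≠ 0 ∧ Metric.infDist (‖x‖⁻¹ • x) S < ε}) := by
    intro S
    refine ⟨⟨0, Or.inl rfl⟩, ?_⟩
    rintro x (hx | hx) t ht
    · left; rw [Set.mem_singleton_iff.mp hx]; simp
    · right
      refine ⟨smul_ne_zero (ne_of_gt ht) hx.1, ?_⟩
      rw [inv_smul_smul_scale ht]
      exact hx.2
  have hsub : ∀ (K S : Set (RV k)), IsConeSet K → K ∩ Metric.sphere 0 1 = S →
      K ⊆ {0} ∪ {x | x ≠ 0 ∧ Metric.infDist (‖x‖⁻¹ • x) S < ε} := by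
    rintro K S hK rfl x hx
    by_cases hx0 : x = 0
    · left; exact hx0
    · right
      refine ⟨hx0, ?_⟩
      have hmem : ‖x‖⁻¹ • x ∈ K ∩ Metric.sphere 0 1 :=
        ⟨hK.2 x hx _ (inv_pos.mpr (norm_pos_iff.mpr hx0)),
          mem_sphere_zero_iff_norm.mpr (norm_inv_smul_eq_one hx0)⟩
      rw [Metric.infDist_zero_of_mem hmem]
      exact hε
  have hproj : ∀ S : Set (RV k),
      IsOpen {p : Metric.sphere (0 : RV k) 1 |
        ∃ x ∈ ({0} ∪ {x | x ≠ 0 ∧ Metric.infDist (‖x‖⁻¹ • x) S < ε} : Set (RV k)),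
          x ≠ 0 ∧ ‖x‖⁻¹ • x = (p : RV k)} := by
    intro S
    have heq : {p : Metric.sphere (0 : RV k) 1 |
        ∃ x ∈ ({0} ∪ {x | x ≠ 0 ∧ Metric.infDist (‖x‖⁻¹ • x) S < ε} : Set (RV k)),
          x ≠ 0 ∧ ‖x‖⁻¹ • x = (p : RV k)}
        = (fun p : Metric.sphere (0 : RV k) 1 => (p : RV k)) ⁻¹'
            {y | Metric.infDist y S < ε} := by
      ext p
      have hp : ‖(p : RV k)‖ = 1 := mem_sphere_zero_iff_norm.mp p.2
      simp only [Set.mem_setOf_eq, Set.mem_preimage]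
      constructor
      · rintro ⟨x, hxV, hx0, hxe⟩
        rcases hxV with hx | hx
        · exact absurd (Set.mem_singleton_iff.mp hx) hx0
        · rw [← hxe]; exact hx.2
      · intro hpd
        refine ⟨(p : RV k), Or.inr ⟨?_, ?_⟩, ?_, by rw [hp]; simp⟩
        · intro h0; rw [h0] at hp; simp at hp
        · rw [hp]; simpa using hpd
        · intro h0; rw [h0] at hp; simp at hp
    rw [heq]
    exact (isOpen_lt (Metric.continuous_infDist_pt S) continuous_const).preimage
      continuous_subtype_val
  refine ⟨V₁, V₂, ⟨hcone S₁, hsub K₁ S₁ hK₁ rfl, hproj S₁⟩,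
    ⟨hcone S₂, hsub K₂ S₂ hK₂ rfl, hproj S₂⟩, ?_⟩
  rintro x ⟨hx1, hx2⟩
  by_cases hx0 : x = 0
  · rw [hx0]; exact h0W
  have hxn : ‖x‖ ≠ 0 := norm_ne_zero_iff.mpr hx0
  -- closure estimate
  have hcl : ∀ S : Set (RV k),
      x ∈ closure ({0} ∪ {y | y ≠ 0 ∧ Metric.infDist (‖y‖⁻¹ • y) S < ε} : Set (RV k)) →
      Metric.infDist (‖x‖⁻¹ • x) S ≤ ε := by
    intro S hxc
    set A : Set (RV k) := {y | y ≠ 0 ∧ Metric.infDist (‖y‖⁻¹ • y) S < ε} with hAdef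
    have hxA : x ∈ closure A := by
      have : closure ({0} ∪ A : Set (RV k)) ⊆ {0} ∪ closure A := by
        rw [closure_union, closure_singleton]
      rcases this hxc with h | h
      · exact absurd h hx0
      · exact h
    have hg : ContinuousAt (fun y : RV k => Metric.infDist (‖y‖⁻¹ • y) S) x := by
      apply (Metric.continuous_infDist_pt S).continuousAt.comp
      exact (continuousAt_id.norm.inv₀ hxn).smul continuousAt_id
    haveI : ((nhdsWithin x A)).NeBot := mem_closure_iff_nhdsWithin_neBot.mp hxA
    have ht : Tendsto (fun y : RV k => Metric.infDist (‖y‖⁻¹ • y) S) (nhdsWithin x A)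
        (nhds (Metric.infDist (‖x‖⁻¹ • x) S)) := hg.tendsto.mono_left nhdsWithin_le_nhds
    refine le_of_tendsto ht ?_
    exact eventually_nhdsWithin_of_forall fun y hy => le_of_lt hy.2
  have hd1 : Metric.infDist (‖x‖⁻¹ • x) S₁ ≤ ε := hcl S₁ hx1
  have hd2 : Metric.infDist (‖x‖⁻¹ • x) S₂ ≤ ε := hcl S₂ hx2
  have hxs : ‖x‖⁻¹ • x ∈ Metric.sphere (0 : RV k) 1 :=
    mem_sphere_zero_iff_norm.mpr (norm_inv_smul_eq_one hx0)
  have hxU : ‖x‖⁻¹ • x ∈ U := hkey _ hxs hd1 hd2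
  obtain ⟨y, hyW, hy0, hye⟩ := (hUmem _ hxs).mp hxU
  have hxhatW : ‖x‖⁻¹ • x ∈ W := by
    rw [← hye]
    exact hW.1.2 y hyW _ (inv_pos.mpr (norm_pos_iff.mpr hy0))
  have := hW.1.2 _ hxhatW ‖x‖ (norm_pos_iff.mpr hx0)
  rwa [smul_smul, mul_inv_cancel₀ hxn, one_smul] at this

end
end
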